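/- Let (G,B₁,B₂) be a Rota-Baxter system of groups with B₁(1_G)=B₂(1_G)=1_G, and let F[G] be the group algebra over a field F of characteristic 0. Define linear maps B̃₁, B̃₂ on F[G] by B̃₁(g)=B₁(g) and B̃₂(g)=B₂(g)⁻¹ for g∈G. Then (F[G], B̃₁, B̃₂) is a Rota-Baxter system of Hopf algebras. -/

import Mathlib

open TensorProduct LinearMap MonoidAlgebra

variable {F : Type*} [Field F] {G : Type*} [Group G]

/-- The comultiplication of the group-algebra Hopf structure: `Δ(g) = g ⊗ g`. -/
noncomputable def comulG (F : Type*) [Field F] (G : Type*) [Group G] :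
    MonoidAlgebra F G →ₗ[F] (MonoidAlgebra F G) ⊗[F] (MonoidAlgebra F G) :=
  Finsupp.lift ((MonoidAlgebra F G) ⊗[F] (MonoidAlgebra F G)) F G
    (fun g => MonoidAlgebra.single g (1 : F) ⊗ₜ[F] MonoidAlgebra.single g (1 : F))
    ∘ₗ (MonoidAlgebra.coeffLinearEquiv F).toLinearMap

/-- The counit of the group-algebra Hopf structure: `ε(g) = 1`. -/
noncomputable def counitG (F : Type*) [Field F] (G : Type*) [Group G] :
    MonoidAlgebra F G →ₗ[F] F :=
  Finsupp.lift F F G (fun _ => 1) ∘ₗ (MonoidAlgebra.coeffLinearEquiv F).toLinearMap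

/-- The antipode of the group-algebra Hopf structure: `S(g) = g⁻¹`. -/
noncomputable def antipodeG (F : Type*) [Field F] (G : Type*) [Group G] :
    MonoidAlgebra F G →ₗ[F] MonoidAlgebra F G :=
  MonoidAlgebra.mapDomainLinearMap F F (fun g : G => g⁻¹)

/-- The descendent operation `a ⊗ b ↦ C₁(a₁) b S(C₂(a₂))` on the group algebra. -/
noncomputable def circG (C₁ C₂ : MonoidAlgebra F G →ₗ[F] MonoidAlgebra F G) :
    (MonoidAlgebra F G) ⊗[F] (MonoidAlgebra F G) →ₗ[F] MonoidAlgebra F G :=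
  (LinearMap.mul' F (MonoidAlgebra F G))
    ∘ₗ (TensorProduct.map
        ((LinearMap.mul' F (MonoidAlgebra F G)) ∘ₗ TensorProduct.map C₁ LinearMap.id)
        ((antipodeG F G) ∘ₗ C₂))
    ∘ₗ (TensorProduct.assoc F _ _ _).symm.toLinearMap
    ∘ₗ (TensorProduct.map LinearMap.id
        (TensorProduct.comm F (MonoidAlgebra F G) (MonoidAlgebra F G)).toLinearMap)
    ∘ₗ (TensorProduct.assoc F _ _ _).toLinearMap
    ∘ₗ (TensorProduct.map (comulG F G) LinearMap.id)

/-!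
The linear extension of any map `G → G` sends group-likes to group-likes, hence is a coalgebra
map. On basis elements the descendent operation is `g ⊗ h ↦ B̃₁ g * h * (B̃₂ g)⁻¹`, so both
Rota-Baxter identities on `F[G]` reduce to identities in `G`: the first axiom as it stands, and
the second after inverting both sides, since `B̃₂ = B₂⁻¹` reverses the order of products.
-/

lemma lhom_ext_single {R M N : Type*} [CommSemiring R] [AddCommMonoid N] [Module R N]
    ⦃φ ψ : MonoidAlgebra R M →ₗ[R] N⦄
    (h : ∀ (m : M) (r : R), φ (single m r) = ψ (single m r)) : φ = ψ :=
  lhom_ext' fun m => LinearMap.ext fun r => h m r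

lemma comulG_single (g : G) (c : F) :
    comulG F G (single g c) = single g c ⊗ₜ[F] single g 1 := by
  simp [comulG, TensorProduct.smul_tmul']

lemma counitG_single (g : G) (c : F) : counitG F G (single g c) = c := by
  simp [counitG]

lemma circG_single (f₁ f₂ : G → G) (g h : G) (c d : F) :
    circG (mapDomainLinearMap F F f₁) (mapDomainLinearMap F F f₂) (single g c ⊗ₜ[F] single h d) =
      single (f₁ g * h * (f₂ g)⁻¹) (c * d) := by
  simp only [circG, antipodeG, LinearMap.comp_apply, TensorProduct.map_tmul, comulG_single,
    LinearEquiv.coe_coe, TensorProduct.assoc_tmul, LinearMap.id_coe, id_eq,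
    TensorProduct.comm_tmul, TensorProduct.assoc_symm_tmul, mapDomainLinearMap_single,
    LinearMap.mul'_apply, single_mul_single, mul_one]

lemma comulG_comp_mapDomainLinearMap (f : G → G) :
    comulG F G ∘ₗ mapDomainLinearMap F F f =
      TensorProduct.map (mapDomainLinearMap F F f) (mapDomainLinearMap F F f) ∘ₗ comulG F G :=
  lhom_ext_single fun g c => by
    simp only [LinearMap.comp_apply, mapDomainLinearMap_single, comulG_single,
      TensorProduct.map_tmul]

lemma counitG_comp_mapDomainLinearMap (f : G → G) :
    counitG F G ∘ₗ mapDomainLinearMap F F f = counitG F G :=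
  lhom_ext_single fun g c => by
    simp only [LinearMap.comp_apply, mapDomainLinearMap_single, counitG_single]

lemma mapDomainLinearMap_one {f : G → G} (hf : f 1 = 1) :
    mapDomainLinearMap F F f (1 : MonoidAlgebra F G) = 1 := by
  rw [one_def, mapDomainLinearMap_single, hf]

lemma mapDomainLinearMap_mul_eq_circG {f f₁ f₂ : G → G}
    (hf : ∀ a b : G, f a * f b = f (f₁ a * b * (f₂ a)⁻¹)) (x y : MonoidAlgebra F G) :
    mapDomainLinearMap F F f x * mapDomainLinearMap F F f y =
      mapDomainLinearMap F F f
        (circG (mapDomainLinearMap F F f₁) (mapDomainLinearMap F F f₂) (x ⊗ₜ[F] y)) := by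
  suffices LinearMap.mul' F (MonoidAlgebra F G) ∘ₗ
        TensorProduct.map (mapDomainLinearMap F F f) (mapDomainLinearMap F F f) =
      mapDomainLinearMap F F f ∘ₗ circG (mapDomainLinearMap F F f₁) (mapDomainLinearMap F F f₂) by
    simpa using LinearMap.congr_fun this (x ⊗ₜ[F] y)
  refine TensorProduct.ext (lhom_ext_single fun g c => lhom_ext_single fun h d => ?_)
  simp only [LinearMap.compr₂ₛₗ_apply, TensorProduct.mk_apply, LinearMap.comp_apply,
    TensorProduct.map_tmul, mapDomainLinearMap_single, LinearMap.mul'_apply, single_mul_single,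
    circG_single, hf]

/-- If `(G, B₁, B₂)` is a Rota-Baxter system of groups with `B₁(1) = B₂(1) = 1`, then the
linear extensions `B̃₁ : g ↦ B₁(g)` and `B̃₂ : g ↦ B₂(g)⁻¹` make the group algebra
`(F[G], B̃₁, B̃₂)` a Rota-Baxter system of Hopf algebras. -/
theorem groupAlgebra_rbSystem (B₁ B₂ : G → G)
    (hB1 : ∀ a b : G, B₁ a * B₁ b = B₁ (B₁ a * b * B₂ a))
    (hB2 : ∀ a b : G, B₂ b * B₂ a = B₂ (B₁ a * b * B₂ a))
    (h1 : B₁ 1 = 1) (h2 : B₂ 1 = 1) :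
    let Bt₁ : MonoidAlgebra F G →ₗ[F] MonoidAlgebra F G := MonoidAlgebra.mapDomainLinearMap F F B₁
    let Bt₂ : MonoidAlgebra F G →ₗ[F] MonoidAlgebra F G :=
      MonoidAlgebra.mapDomainLinearMap F F (fun g : G => (B₂ g)⁻¹)
    (comulG F G ∘ₗ Bt₁ = TensorProduct.map Bt₁ Bt₁ ∘ₗ comulG F G) ∧
    (counitG F G ∘ₗ Bt₁ = counitG F G) ∧
    (comulG F G ∘ₗ Bt₂ = TensorProduct.map Bt₂ Bt₂ ∘ₗ comulG F G) ∧
    (counitG F G ∘ₗ Bt₂ = counitG F G) ∧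
    Bt₁ 1 = 1 ∧ Bt₂ 1 = 1 ∧
    (∀ a b : MonoidAlgebra F G, Bt₁ a * Bt₁ b = Bt₁ (circG Bt₁ Bt₂ (a ⊗ₜ[F] b))) ∧
    (∀ a b : MonoidAlgebra F G, Bt₂ a * Bt₂ b = Bt₂ (circG Bt₁ Bt₂ (a ⊗ₜ[F] b))) := by
  intro Bt₁ Bt₂
  refine ⟨comulG_comp_mapDomainLinearMap B₁, counitG_comp_mapDomainLinearMap B₁,
    comulG_comp_mapDomainLinearMap _, counitG_comp_mapDomainLinearMap _,
    mapDomainLinearMap_one h1, mapDomainLinearMap_one (by rw [h2, inv_one]), ?_, ?_⟩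
  · exact mapDomainLinearMap_mul_eq_circG fun a b => by rw [inv_inv, hB1]
  · exact mapDomainLinearMap_mul_eq_circG fun a b => by rw [inv_inv, ← mul_inv_rev, hB2]
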